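/- Define F(t) = V(t) − (1/4)·M(t) + tπχ for t ∈ ℝ, where V'(t) = ∫_Σ det(cosh t·I + sinh t·A(x)) dμ(x), M(t) = ∫_Σ (cosh(2t)·tr A(x) + sinh(2t)·(det A(x) + 1)) dμ(x), and Gauss–Bonnet gives ∫_Σ (det A(x) − 1) dμ(x) = 2πχ. Then F is constant in t. -/

import Mathlib

/-!
Expanding the determinant, `V'(t) = cosh² t · |μ| + cosh t sinh t · ∫ tr A + sinh² t · ∫ det A`.
With the double-angle formulas this is exactly the derivative of
`M(t)/4 - t (∫ det A - |μ|)/2`, and by Gauss–Bonnet `(∫ det A - |μ|)/2 = πχ`,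
so `F = V - (M/4 - t πχ)` has derivative zero.
-/

open MeasureTheory Matrix Real

theorem Matrix.det_fin_two_smul_one_add_smul {R : Type*} [CommRing R] (a b : R)
    (B : Matrix (Fin 2) (Fin 2) R) :
    (a • (1 : Matrix (Fin 2) (Fin 2) R) + b • B).det = a ^ 2 + a * b * B.trace + b ^ 2 * B.det := by
  simp [det_fin_two, trace_fin_two]
  ring

theorem MeasureTheory.integral_const_add_const_mul_add_const_mul {S : Type*} [MeasurableSpace S]
    {μ : Measure S} [IsFiniteMeasure μ] {f g : S → ℝ} (hf : Integrable f μ) (hg : Integrable g μ)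
    (c a b : ℝ) :
    ∫ x, (c + a * f x + b * g x) ∂μ = c * μ.real Set.univ + a * ∫ x, f x ∂μ + b * ∫ x, g x ∂μ := by
  rw [integral_add ((integrable_const c).fun_add (hf.const_mul a)) (hg.const_mul b),
    integral_add (integrable_const c) (hf.const_mul a), integral_const_mul, integral_const_mul,
    integral_const, smul_eq_mul, mul_comm c]

theorem hasDerivAt_cosh_two_mul_add_sinh_two_mul_sub (T D m t : ℝ) :
    HasDerivAt (fun u => (cosh (2 * u) * T + sinh (2 * u) * (D + m)) / 4 - u * ((D - m) / 2))
      (cosh t ^ 2 * m + cosh t * sinh t * T + sinh t ^ 2 * D) t := by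
  have h2 : HasDerivAt (fun u : ℝ => 2 * u) 2 t := by
    simpa using (hasDerivAt_id t).const_mul 2
  have := ((h2.cosh.mul_const T).fun_add (h2.sinh.mul_const (D + m))).div_const 4 |>.fun_sub
    ((hasDerivAt_id t).mul_const ((D - m) / 2))
  refine this.congr_deriv ?_
  rw [sinh_two_mul, cosh_two_mul]
  linear_combination ((D - m) / 2) * cosh_sq_sub_sinh_sq t

theorem stmt13 {S : Type*} [MeasurableSpace S] (μ : Measure S) [IsFiniteMeasure μ]
    (A : S → Matrix (Fin 2) (Fin 2) ℝ)
    (hIntTr : Integrable (fun x => (A x).trace) μ)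
    (hIntDet : Integrable (fun x => (A x).det) μ)
    (χ : ℝ)
    (hGB : ∫ x, ((A x).det - 1) ∂μ = 2 * Real.pi * χ)
    (V M F : ℝ → ℝ)
    (hV : ∀ t : ℝ, HasDerivAt V
      (∫ x, (Real.cosh t • (1 : Matrix (Fin 2) (Fin 2) ℝ) + Real.sinh t • A x).det ∂μ) t)
    (hM : ∀ t : ℝ, M t =
      ∫ x, (Real.cosh (2 * t) * (A x).trace + Real.sinh (2 * t) * ((A x).det + 1)) ∂μ)
    (hF : ∀ t : ℝ, F t = V t - M t / 4 + t * Real.pi * χ) :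
    ∀ s t : ℝ, F s = F t := by
  set T := ∫ x, (A x).trace ∂μ
  set D := ∫ x, (A x).det ∂μ
  set m := μ.real Set.univ
  have hπχ : π * χ = (D - m) / 2 := by
    rw [integral_sub hIntDet (integrable_const 1), integral_const, smul_eq_mul, mul_one] at hGB
    linarith
  have hVt : ∀ t, ∫ x, (cosh t • (1 : Matrix (Fin 2) (Fin 2) ℝ) + sinh t • A x).det ∂μ
      = cosh t ^ 2 * m + cosh t * sinh t * T + sinh t ^ 2 * D := fun t => by
    simp_rw [det_fin_two_smul_one_add_smul]
    exact integral_const_add_const_mul_add_const_mul hIntTr hIntDet _ _ _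
  have hMt : ∀ t, M t = cosh (2 * t) * T + sinh (2 * t) * (D + m) := fun t => by
    calc M t
        = ∫ x, (sinh (2 * t) + cosh (2 * t) * (A x).trace + sinh (2 * t) * (A x).det) ∂μ := by
          rw [hM]; congr 1; funext x; ring
      _ = _ := by rw [integral_const_add_const_mul_add_const_mul hIntTr hIntDet]; ring
  have hFeq : F = fun u => V u - ((cosh (2 * u) * T + sinh (2 * u) * (D + m)) / 4
      - u * ((D - m) / 2)) :=
    funext fun u => by rw [hF, hMt, mul_assoc, hπχ]; ring
  have hF' : ∀ t, HasDerivAt F 0 t := fun t => by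
    have := (hV t).fun_sub (hasDerivAt_cosh_two_mul_add_sinh_two_mul_sub T D m t)
    rwa [hVt, sub_self, ← hFeq] at this
  intro s t
  exact is_const_of_deriv_eq_zero (fun x => (hF' x).differentiableAt)
    (fun x => (hF' x).deriv) s t
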